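/- Let k be a finite field and let A be a nonzero finite étale k-algebra, i.e. a k-algebra isomorphic to a finite product of finite field extensions of k. Then there exists a surjective k-algebra homomorphism k[t] → A if and only if for every finite field extension l of k, the number of maximal ideals m of A such that the residue field A/m is isomorphic to l as a k-algebra is at most the number of monic irreducible polynomials of degree [l : k] in k[X]. -/

import Mathlib

/-!
Both sides only see the maximal ideals of `A`, sorted by residue degree: over a finite field a
finite extension is determined up to isomorphism by its degree, and the maximal ideals of `k[X]`
of residue degree `n` are the ideals `(f)` with `f` monic irreducible of degree `n`. A surjection
`k[X] → A` pulls maximal ideals back injectively, preserving residue fields. Conversely, a reduced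
finite `k`-algebra is the product of its residue fields, so a degree-preserving injection of
maximal ideals of `A` into those of `k[X]` gives, by the Chinese remainder theorem, a surjection
`k[X] → ∏ k[X]/(f_m) ≅ ∏ A/m ≅ A`.
-/

open Polynomial Module Set Function

theorem FiniteField.nonempty_algEquiv_of_finrank_eq {k l₁ l₂ : Type*} [Field k] [Finite k]
    [Field l₁] [Field l₂] [Algebra k l₁] [Algebra k l₂] [FiniteDimensional k l₁]
    (h : finrank k l₁ = finrank k l₂) : Nonempty (l₁ ≃ₐ[k] l₂) := by
  obtain ⟨p, _⟩ := CharP.exists k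
  have : Fact p.Prime := ⟨CharP.char_is_prime k p⟩
  have : NeZero (finrank k l₁) := ⟨finrank_pos.ne'⟩
  exact ⟨(algEquivExtension k p _ l₁ rfl).trans (algEquivExtension k p _ l₂ h.symm).symm⟩

theorem Polynomial.finite_setOf_natDegree_le {R : Type*} [CommRing R] [Finite R] (n : ℕ) :
    {f : R[X] | f.natDegree ≤ n}.Finite := by
  have : Finite (degreeLT R (n + 1)) := .of_equiv _ (degreeLTEquiv R (n + 1)).toEquiv.symm
  refine (Set.toFinite (degreeLT R (n + 1) : Set R[X])).subset fun f hf => ?_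
  rw [SetLike.mem_coe, mem_degreeLT]
  exact (degree_le_of_natDegree_le hf).trans_lt (by exact_mod_cast n.lt_succ_self)

theorem Set.exists_injOn_of_ncard_fiber_le {α β ι : Type*} [Nonempty β]
    {s : Set α} {t : Set β} {c : α → ι} {d : β → ι} (hs : s.Finite)
    (ht : ∀ i, {b ∈ t | d b = i}.Finite)
    (h : ∀ i, {a ∈ s | c a = i}.ncard ≤ {b ∈ t | d b = i}.ncard) :
    ∃ σ : α → β, InjOn σ s ∧ ∀ a ∈ s, σ a ∈ t ∧ d (σ a) = c a := by
  have hfiber : ∀ i, ∃ f : α → β,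
      {a ∈ s | c a = i} ⊆ f ⁻¹' {b ∈ t | d b = i} ∧ InjOn f {a ∈ s | c a = i} := fun i => by
    have hsi : {a ∈ s | c a = i}.Finite := hs.subset (sep_subset s _)
    refine hsi.exists_injOn_of_encard_le ?_
    rw [← hsi.cast_ncard_eq, ← (ht i).cast_ncard_eq]
    exact_mod_cast h i
  choose f hmaps hinj using hfiber
  refine ⟨fun a => f (c a) a, fun a ha a' ha' heq => ?_, fun a ha => hmaps (c a) ⟨ha, rfl⟩⟩
  have hc : c a' = c a := by
    rw [← (hmaps (c a) ⟨ha, rfl⟩).2, ← (hmaps (c a') ⟨ha', rfl⟩).2]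
    exact congrArg d heq.symm
  exact hinj (c a) ⟨ha, rfl⟩ ⟨ha', hc⟩ (by simpa only [hc] using heq)

section ResidueDegree

universe u

variable (k : Type*) (A : Type u) [Field k] [CommRing A] [Algebra k A]

/-- `finrank` is `0` on an infinite-dimensional quotient, so this set need not be empty for
`n = 0`. -/
def maximalIdealsOfDegree (n : ℕ) : Set (Ideal A) :=
  {m | m.IsMaximal ∧ finrank k (A ⧸ m) = n}

variable {k A}

theorem setOf_isMaximal_nonempty_algEquiv_eq [Finite k] (l : Type*) [Field l] [Algebra k l]
    [FiniteDimensional k l] :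
    {m : Ideal A | m.IsMaximal ∧ Nonempty ((A ⧸ m) ≃ₐ[k] l)} =
      maximalIdealsOfDegree k A (finrank k l) := by
  ext m
  refine and_congr_right fun hm => ⟨fun ⟨e⟩ => e.toLinearEquiv.finrank_eq, fun h => ?_⟩
  let := Ideal.Quotient.field m
  have : FiniteDimensional k (A ⧸ m) := finite_of_finrank_pos (h ▸ finrank_pos)
  exact FiniteField.nonempty_algEquiv_of_finrank_eq h

theorem forall_ncard_le_iff [Finite k] [Module.Finite k A] (N : ℕ → ℕ) :
    (∀ (l : Type u) [Field l] [Algebra k l] [FiniteDimensional k l],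
        {m : Ideal A | m.IsMaximal ∧ Nonempty ((A ⧸ m) ≃ₐ[k] l)}.ncard ≤ N (finrank k l)) ↔
      ∀ n, (maximalIdealsOfDegree k A n).ncard ≤ N n := by
  constructor
  · intro h n
    rcases eq_empty_or_nonempty (maximalIdealsOfDegree k A n) with hempty | ⟨m, hm, rfl⟩
    · simp [hempty]
    let := Ideal.Quotient.field m
    simpa only [setOf_isMaximal_nonempty_algEquiv_eq] using h (A ⧸ m)
  · intro h l _ _ _
    rw [setOf_isMaximal_nonempty_algEquiv_eq]
    exact h _

theorem maximalIdealsOfDegree_polynomial (n : ℕ) :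
    maximalIdealsOfDegree k k[X] n =
      (fun f => Ideal.span {f}) '' {f : k[X] | f.Monic ∧ Irreducible f ∧ f.natDegree = n} := by
  ext m
  constructor
  · classical
    rintro ⟨hm, rfl⟩
    obtain ⟨g, rfl⟩ := IsPrincipalIdealRing.principal m
    rw [Ideal.submodule_span_eq] at hm ⊢
    have hg0 : g ≠ 0 := by
      rintro rfl
      exact Polynomial.not_isField k (Ring.isField_iff_maximal_bot.mpr (by simpa using hm))
    have hspan : Ideal.span {normalize g} = Ideal.span {g} :=
      Ideal.span_singleton_eq_span_singleton.mpr (normalize_associated g)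
    refine ⟨normalize g, ⟨monic_normalize hg0, (associated_normalize g).irreducible
      (Ideal.irreducible_of_isMaximal_span_singleton hg0 hm), ?_⟩, hspan⟩
    rw [← finrank_quotient_span_eq_natDegree, hspan]
  · rintro ⟨f, ⟨-, hirr, rfl⟩, rfl⟩
    exact ⟨PrincipalIdealRing.isMaximal_of_irreducible hirr, finrank_quotient_span_eq_natDegree⟩

theorem injOn_span_singleton_monic : InjOn (fun f : k[X] => Ideal.span {f}) {f | f.Monic} :=
  fun _ hf _ hg h =>
    eq_of_monic_of_associated hf hg (Ideal.span_singleton_eq_span_singleton.mp h)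

theorem ncard_maximalIdealsOfDegree_polynomial (n : ℕ) :
    (maximalIdealsOfDegree k k[X] n).ncard =
      {f : k[X] | f.Monic ∧ Irreducible f ∧ f.natDegree = n}.ncard := by
  rw [maximalIdealsOfDegree_polynomial]
  exact (injOn_span_singleton_monic.mono fun f hf => hf.1).ncard_image

theorem finite_maximalIdealsOfDegree_polynomial [Finite k] (n : ℕ) :
    (maximalIdealsOfDegree k k[X] n).Finite := by
  rw [maximalIdealsOfDegree_polynomial]
  exact ((finite_setOf_natDegree_le n).subset fun f hf => hf.2.2.le).image _

variable {R : Type*} [CommRing R] [Algebra k R]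

theorem ncard_maximalIdealsOfDegree_le_of_surjective {φ : R →ₐ[k] A} (hφ : Surjective φ)
    {n : ℕ} (hR : (maximalIdealsOfDegree k R n).Finite) :
    (maximalIdealsOfDegree k A n).ncard ≤ (maximalIdealsOfDegree k R n).ncard := by
  refine ncard_le_ncard_of_injOn (Ideal.comap φ) ?_
    (Ideal.comap_injective_of_surjective φ hφ).injOn hR
  rintro m ⟨hm, rfl⟩
  have hker : RingHom.ker ((Ideal.Quotient.mkₐ k m).comp φ) = Ideal.comap φ m := by
    ext; simp [RingHom.mem_ker, Ideal.Quotient.eq_zero_iff_mem]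
  have hsurj : Surjective ((Ideal.Quotient.mkₐ k m).comp φ) :=
    (Ideal.Quotient.mkₐ_surjective k m).comp hφ
  refine ⟨Ideal.comap_isMaximal_of_surjective φ hφ, LinearEquiv.finrank_eq ?_⟩
  exact ((Ideal.quotientEquivAlgOfEq k hker).symm.trans
    (Ideal.quotientKerAlgEquivOfSurjective hsurj)).toLinearEquiv

theorem exists_surjective_of_injOn_isMaximal [IsArtinianRing A] [IsReduced A]
    (σ : Ideal A → Ideal R)
    (hσ : InjOn σ {m | m.IsMaximal}) (hmax : ∀ m : Ideal A, m.IsMaximal → (σ m).IsMaximal)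
    (e : ∀ m : Ideal A, m.IsMaximal → Nonempty ((A ⧸ m) ≃ₐ[k] (R ⧸ σ m))) :
    ∃ φ : R →ₐ[k] A, Surjective φ := by
  have hcop : Pairwise (IsCoprime on fun m : MaximalSpectrum A => σ m.asIdeal) := by
    intro m m' hne
    refine Ideal.isCoprime_iff_sup_eq.mpr
      ((hmax _ m.isMaximal).coprime_of_ne (hmax _ m'.isMaximal) ?_)
    exact fun h => hne (MaximalSpectrum.ext (hσ m.isMaximal m'.isMaximal h))
  let crt : R →ₐ[k] ∀ m : MaximalSpectrum A, R ⧸ σ m.asIdeal :=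
    AlgHom.pi fun m => Ideal.Quotient.mkₐ k _
  have hcrt : Surjective crt := fun x =>
    let ⟨r, hr⟩ := Ideal.pi_quotient_surjective hcop x; ⟨r, funext hr⟩
  -- `IsArtinianRing.equivPi` is only `A`-linear; the same map is `k`-linear.
  let π : A ≃ₐ[k] ∀ m : MaximalSpectrum A, A ⧸ m.asIdeal :=
    AlgEquiv.ofBijective (AlgHom.pi fun m => Ideal.Quotient.mkₐ k _)
      (IsArtinianRing.equivPi A).bijective
  let E := AlgEquiv.piCongrRight fun m : MaximalSpectrum A =>
    (e m.asIdeal m.isMaximal).some.symm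
  exact ⟨π.symm.toAlgHom.comp (E.toAlgHom.comp crt),
    π.symm.surjective.comp (E.surjective.comp hcrt)⟩

theorem exists_surjective_of_ncard_maximalIdealsOfDegree_le [Finite k] [Module.Finite k A]
    [IsReduced A]
    (hR : ∀ n, (maximalIdealsOfDegree k R n).Finite)
    (h : ∀ n, (maximalIdealsOfDegree k A n).ncard ≤ (maximalIdealsOfDegree k R n).ncard) :
    ∃ φ : R →ₐ[k] A, Surjective φ := by
  have : IsArtinianRing A := isArtinian_of_tower k inferInstance
  obtain ⟨σ, hσ, hmaps⟩ :=
    exists_injOn_of_ncard_fiber_le (IsArtinianRing.setOfPred_isMaximal_finite A) hR h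
  refine exists_surjective_of_injOn_isMaximal σ hσ (fun m hm => (hmaps m hm).1) fun m hm => ?_
  have : (σ m).IsMaximal := (hmaps m hm).1
  let := Ideal.Quotient.field m
  let := Ideal.Quotient.field (σ m)
  exact FiniteField.nonempty_algEquiv_of_finrank_eq (hmaps m hm).2.symm

end ResidueDegree

theorem stmt_7_general (k : Type) [Field k] [Fintype k] (A : Type) [CommRing A]
    [Algebra k A] [FiniteDimensional k A] [IsReduced A] :
    (∃ φ : Polynomial k →ₐ[k] A, Function.Surjective φ) ↔
      ∀ (l : Type) [Field l] [Algebra k l] [FiniteDimensional k l],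
        {m : Ideal A | m.IsMaximal ∧ Nonempty ((A ⧸ m) ≃ₐ[k] l)}.ncard ≤
          {f : Polynomial k | f.Monic ∧ Irreducible f ∧
            f.natDegree = Module.finrank k l}.ncard := by
  rw [forall_ncard_le_iff fun n => {f : k[X] | f.Monic ∧ Irreducible f ∧ f.natDegree = n}.ncard]
  simp only [← ncard_maximalIdealsOfDegree_polynomial]
  exact ⟨fun ⟨_, hφ⟩ n => ncard_maximalIdealsOfDegree_le_of_surjective hφ
      (finite_maximalIdealsOfDegree_polynomial n),
    exists_surjective_of_ncard_maximalIdealsOfDegree_le finite_maximalIdealsOfDegree_polynomial⟩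

/-- The embeddability criterion for finite étale schemes over a finite field into the
affine line: a nonzero finite étale `k`-algebra `A` (equivalently, a nonzero
finite-dimensional reduced commutative `k`-algebra) admits a surjective `k`-algebra
homomorphism `k[t] → A` if and only if for every finite field extension `l/k`, the
number of maximal ideals of `A` with residue field `l` is at most the number of monic
irreducible polynomials of degree `[l : k]` in `k[X]`. -/
theorem stmt_7 (k : Type) [Field k] [Fintype k] (A : Type) [CommRing A]
    [Algebra k A] [Nontrivial A] [FiniteDimensional k A] [IsReduced A] :
    (∃ φ : Polynomial k →ₐ[k] A, Function.Surjective φ) ↔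
      ∀ (l : Type) [Field l] [Algebra k l] [FiniteDimensional k l],
        {m : Ideal A | m.IsMaximal ∧ Nonempty ((A ⧸ m) ≃ₐ[k] l)}.ncard ≤
          {f : Polynomial k | f.Monic ∧ Irreducible f ∧
            f.natDegree = Module.finrank k l}.ncard :=
  stmt_7_general k A
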